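/- Let A be a unital C*-algebra with a unitary u and isometries w_m satisfying relations (B0)-(B3). Fix positive integers m, n, set d = gcd(m,n), m' = m/d, n' = n/d, and choose integers α', β' with 1 = α'm' - β'n'. Then for all integers k, l: if d does not divide l - k then w_m w_m* u^{l-k} w_n w_n* = 0, and if d divides l - k then w_m w_m* u^{l-k} w_n w_n* = u^{mα'(l-k)/d} w_{lcm(m,n)} w_{lcm(m,n)}* (u*)^{nβ'(l-k)/d}. -/

import Mathlib

/-! Write `m = d m'`, `n = d n'` with `m'`, `n'` coprime. Reducing to primes, where (B3) kills
every power of `u` not divisible by `p`, one gets `w_d* u^t w_d = u^{t/d}` if `d ∣ t` and `0`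
otherwise; hence the product vanishes unless `t = l - k = d s`, and then it equals
`w_d (w_{m'} w_{m'}* u^s w_{n'} w_{n'}*) w_d*`. For coprime `m'`, `n'` the elements `w_{m'}*` and
`w_{n'}` commute by (B2), so splitting `s = m' (α' s) + n' (-β' s)` and moving each power of `u`
through the adjacent isometry by (B1) gives `u^{m' α' s} w_{m'n'} w_{m'n'}* u^{-n' β' s}`.
Conjugating by `w_d` multiplies both exponents by `d`. -/

section StarMul
variable {R : Type*} [Monoid R] [StarMul R]

theorem SemiconjBy.unitary_zpow_right {a : R} {x y : unitary R} (h : SemiconjBy a x y) (t : ℤ) :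
    SemiconjBy a ↑(x ^ t) ↑(y ^ t) := by
  simpa [← map_zpow] using h.units_zpow_right (x := Unitary.toUnits x) (y := Unitary.toUnits y) t

theorem mul_star_mul_mul_mul_star_eq {a b c : R} (z : R) :
    c * a * star (c * a) * z * (c * b * star (c * b))
      = c * (a * star a * (star c * z * c) * (b * star b)) * star c := by
  simp only [star_mul, mul_assoc]

section Intertwining
variable {a : R} {u : unitary R} {m : ℕ}

theorem mul_coe_zpow_of_mul_eq_pow_mul (h : a * u = (u : R) ^ m * a) (t : ℤ) :
    a * ↑(u ^ t) = ↑(u ^ ((m : ℤ) * t)) * a := by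
  have h' : SemiconjBy a u ↑(u ^ m) := by simpa [SemiconjBy] using h
  rw [zpow_mul, zpow_natCast]
  exact h'.unitary_zpow_right t

theorem star_mul_coe_zpow_of_mul_eq_pow_mul (h : a * u = (u : R) ^ m * a) (t : ℤ) :
    star a * ↑(u ^ ((m : ℤ) * t)) = ↑(u ^ t) * star a := by
  simpa [← Unitary.coe_star, Unitary.star_eq_inv, mul_neg] using
    congrArg star (mul_coe_zpow_of_mul_eq_pow_mul h (-t)).symm

theorem star_mul_coe_zpow_mul_self_of_mul_eq_pow_mul (h : a * u = (u : R) ^ m * a)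
    (hiso : star a * a = 1) (t : ℤ) :
    star a * ↑(u ^ ((m : ℤ) * t)) * a = ↑(u ^ t) := by
  rw [star_mul_coe_zpow_of_mul_eq_pow_mul h, mul_assoc, hiso, mul_one]

theorem conj_coe_zpow_mul_mul_coe_zpow (h : a * u = (u : R) ^ m * a) (z : R) (x y : ℤ) :
    a * (↑(u ^ x) * z * ↑(u ^ y)) * star a
      = ↑(u ^ ((m : ℤ) * x)) * (a * z * star a) * ↑(u ^ ((m : ℤ) * y)) := by
  simp only [mul_assoc]
  rw [← star_mul_coe_zpow_of_mul_eq_pow_mul h y, ← mul_assoc a,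
    mul_coe_zpow_of_mul_eq_pow_mul h]
  simp only [mul_assoc]

theorem mul_star_mul_coe_zpow_mul_mul_star {b : R} {n : ℕ} (ha : a * u = (u : R) ^ m * a)
    (hb : b * u = (u : R) ^ n * b) (hab : Commute a b) (hcomm : Commute (star a) b) (x y : ℤ) :
    a * star a * ↑(u ^ ((m : ℤ) * x + n * y)) * (b * star b)
      = ↑(u ^ ((m : ℤ) * x)) * (a * b * star (a * b)) * ↑(u ^ ((n : ℤ) * y)) := by
  calc a * star a * ↑(u ^ ((m : ℤ) * x + n * y)) * (b * star b)
      = a * (star a * ↑(u ^ ((m : ℤ) * x))) * (↑(u ^ ((n : ℤ) * y)) * b) * star b := by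
        simp only [zpow_add, Submonoid.coe_mul, mul_assoc]
    _ = a * ↑(u ^ x) * (star a * b) * (↑(u ^ y) * star b) := by
        rw [star_mul_coe_zpow_of_mul_eq_pow_mul ha, ← mul_coe_zpow_of_mul_eq_pow_mul hb]
        simp only [mul_assoc]
    _ = ↑(u ^ ((m : ℤ) * x)) * (a * b * (star a * star b)) * ↑(u ^ ((n : ℤ) * y)) := by
        rw [mul_coe_zpow_of_mul_eq_pow_mul ha, hcomm.eq,
          ← star_mul_coe_zpow_of_mul_eq_pow_mul hb]
        simp only [mul_assoc]
    _ = ↑(u ^ ((m : ℤ) * x)) * (a * b * star (a * b)) * ↑(u ^ ((n : ℤ) * y)) := by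
        rw [star_mul, hab.star_star.eq]

theorem eq_one_of_star_mul_self_of_mul_self (hiso : star a * a = 1) (h : a * a = a) : a = 1 :=
  calc a = star a * a * a := by rw [hiso, one_mul]
    _ = 1 := by rw [mul_assoc, h, hiso]

end Intertwining

variable {w : ℕ → R}

theorem commute_star_w_of_not_dvd (hw1 : w 1 = 1)
    (hB0 : ∀ m n : ℕ, 0 < m → 0 < n → w (m * n) = w m * w n)
    (hB2 : ∀ p q : ℕ, p.Prime → q.Prime → p ≠ q → star (w p) * w q = w q * star (w p))
    {p n : ℕ} (hp : p.Prime) (hn : 0 < n) (hpn : ¬ p ∣ n) : Commute (star (w p)) (w n) := by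
  induction n using Nat.recOnMul with
  | zero => exact absurd hn (lt_irrefl 0)
  | one => exact hw1 ▸ Commute.one_right _
  | prime q hq => exact hB2 p q hp hq (by rintro rfl; exact hpn dvd_rfl)
  | mul a b iha ihb =>
    obtain ⟨ha, hb⟩ := CanonicallyOrderedAdd.mul_pos.mp hn
    rw [hB0 a b ha hb]
    exact (iha ha fun h => hpn (h.mul_right b)).mul_right (ihb hb fun h => hpn (h.mul_left a))

theorem commute_star_w_of_coprime (hw1 : w 1 = 1)
    (hB0 : ∀ m n : ℕ, 0 < m → 0 < n → w (m * n) = w m * w n)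
    (hB2 : ∀ p q : ℕ, p.Prime → q.Prime → p ≠ q → star (w p) * w q = w q * star (w p))
    {m n : ℕ} (hm : 0 < m) (hn : 0 < n) (hco : m.Coprime n) : Commute (star (w m)) (w n) := by
  induction m using Nat.recOnMul with
  | zero => exact absurd hm (lt_irrefl 0)
  | one => rw [hw1, star_one]; exact Commute.one_left _
  | prime p hp => exact commute_star_w_of_not_dvd hw1 hB0 hB2 hp hn (hp.coprime_iff_not_dvd.mp hco)
  | mul a b iha ihb =>
    obtain ⟨ha, hb⟩ := CanonicallyOrderedAdd.mul_pos.mp hm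
    rw [Nat.coprime_mul_iff_left] at hco
    rw [hB0 a b ha hb, star_mul]
    exact (ihb hb hco.2).mul_left (iha ha hco.1)

theorem w_mul_star_mul_coe_zpow_mul_w_mul_star_of_coprime {u : unitary R}
    (hiso : ∀ m : ℕ, 0 < m → star (w m) * w m = 1)
    (hB0 : ∀ m n : ℕ, 0 < m → 0 < n → w (m * n) = w m * w n)
    (hB1 : ∀ m : ℕ, 0 < m → w m * (u : R) = (u : R) ^ m * w m)
    (hB2 : ∀ p q : ℕ, p.Prime → q.Prime → p ≠ q → star (w p) * w q = w q * star (w p))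
    {d m n : ℕ} (hd : 0 < d) (hm : 0 < m) (hn : 0 < n) (hco : m.Coprime n) (x y : ℤ) :
    w (d * m) * star (w (d * m)) * ↑(u ^ ((d : ℤ) * (m * x + n * y)))
        * (w (d * n) * star (w (d * n)))
      = ↑(u ^ ((d : ℤ) * m * x)) * (w (d * m * n) * star (w (d * m * n)))
          * ↑(u ^ ((d : ℤ) * n * y)) := by
  have hw1 : w 1 = 1 := eq_one_of_star_mul_self_of_mul_self (hiso 1 one_pos)
    (by rw [← hB0 1 1 one_pos one_pos])
  have hab : Commute (w m) (w n) := by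
    rw [Commute, SemiconjBy, ← hB0 m n hm hn, ← hB0 n m hn hm, mul_comm]
  rw [hB0 d m hd hm, hB0 d n hd hn, mul_star_mul_mul_mul_star_eq,
    star_mul_coe_zpow_mul_self_of_mul_eq_pow_mul (hB1 d hd) (hiso d hd),
    mul_star_mul_coe_zpow_mul_mul_star (hB1 m hm) (hB1 n hn) hab
      (commute_star_w_of_coprime hw1 hB0 hB2 hm hn hco),
    conj_coe_zpow_mul_mul_coe_zpow (hB1 d hd), ← hB0 m n hm hn, mul_assoc d m n,
    hB0 d (m * n) hd (Nat.mul_pos hm hn)]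
  simp only [star_mul, mul_assoc]

end StarMul

section MonoidWithZero
variable {R : Type*} [MonoidWithZero R] [StarMul R]

theorem star_mul_coe_zpow_mul_self_eq_zero {a : R} {u : unitary R} {p : ℕ} (hp : 0 < p)
    (h : a * u = (u : R) ^ p * a)
    (hzero : ∀ k : ℕ, 1 ≤ k → k < p → star a * (u : R) ^ k * a = 0)
    {t : ℤ} (ht : ¬ (p : ℤ) ∣ t) :
    star a * ↑(u ^ t) * a = 0 := by
  have hp' : (0 : ℤ) < p := by exact_mod_cast hp
  have hr0 : 0 ≤ t % p := Int.emod_nonneg t hp'.ne'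
  have hrp : t % p < p := Int.emod_lt_of_pos t hp'
  have hr : t % p ≠ 0 := fun h => ht (Int.dvd_of_emod_eq_zero h)
  have ht' : t = p * (t / p) + ((t % p).toNat : ℤ) := by
    rw [Int.toNat_of_nonneg hr0, Int.mul_ediv_add_emod]
  rw [ht', zpow_add, Submonoid.coe_mul, ← mul_assoc, star_mul_coe_zpow_of_mul_eq_pow_mul h,
    zpow_natCast, SubmonoidClass.coe_pow, mul_assoc, mul_assoc, ← mul_assoc (star a),
    hzero _ (by omega) (by omega), mul_zero]

variable {w : ℕ → R} {u : unitary R}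

theorem star_w_mul_coe_zpow_mul_w_eq_zero (hiso : ∀ m : ℕ, 0 < m → star (w m) * w m = 1)
    (hB0 : ∀ m n : ℕ, 0 < m → 0 < n → w (m * n) = w m * w n)
    (hB1 : ∀ m : ℕ, 0 < m → w m * (u : R) = (u : R) ^ m * w m)
    (hB3 : ∀ p k : ℕ, p.Prime → 1 ≤ k → k < p → star (w p) * (u : R) ^ k * w p = 0)
    {m : ℕ} (hm : 0 < m) {t : ℤ} (ht : ¬ (m : ℤ) ∣ t) :
    star (w m) * ↑(u ^ t) * w m = 0 := by
  induction m using Nat.recOnMul generalizing t with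
  | zero => exact absurd hm (lt_irrefl 0)
  | one => exact absurd (one_dvd t) (by exact_mod_cast ht)
  | prime p hp => exact star_mul_coe_zpow_mul_self_eq_zero hp.pos (hB1 p hp.pos) (hB3 p · hp) ht
  | mul a b iha ihb =>
    obtain ⟨ha, hb⟩ := CanonicallyOrderedAdd.mul_pos.mp hm
    have hsplit : star (w (a * b)) * ↑(u ^ t) * w (a * b)
        = star (w b) * (star (w a) * ↑(u ^ t) * w a) * w b := by
      rw [hB0 a b ha hb, star_mul]
      simp only [mul_assoc]
    rw [hsplit]
    by_cases hat : (a : ℤ) ∣ t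
    · obtain ⟨s, rfl⟩ := hat
      rw [star_mul_coe_zpow_mul_self_of_mul_eq_pow_mul (hB1 a ha) (hiso a ha)]
      exact ihb hb fun hbs => ht (by push_cast; exact mul_dvd_mul_left _ hbs)
    · rw [iha ha hat, mul_zero, zero_mul]

theorem w_mul_star_mul_coe_zpow_mul_w_mul_star_eq_zero
    (hiso : ∀ m : ℕ, 0 < m → star (w m) * w m = 1)
    (hB0 : ∀ m n : ℕ, 0 < m → 0 < n → w (m * n) = w m * w n)
    (hB1 : ∀ m : ℕ, 0 < m → w m * (u : R) = (u : R) ^ m * w m)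
    (hB3 : ∀ p k : ℕ, p.Prime → 1 ≤ k → k < p → star (w p) * (u : R) ^ k * w p = 0)
    {m n : ℕ} (hm : 0 < m) (hn : 0 < n) {t : ℤ} (ht : ¬ (m.gcd n : ℤ) ∣ t) :
    w m * star (w m) * ↑(u ^ t) * (w n * star (w n)) = 0 := by
  obtain ⟨m', n', -, hm', hn'⟩ := Nat.exists_coprime m n
  set d := m.gcd n
  have hd : 0 < d := Nat.gcd_pos_of_pos_left n hm
  have hm'0 : 0 < m' := (CanonicallyOrderedAdd.mul_pos.mp (hm' ▸ hm)).1
  have hn'0 : 0 < n' := (CanonicallyOrderedAdd.mul_pos.mp (hn' ▸ hn)).1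
  rw [hm', hn', mul_comm m', mul_comm n', hB0 d m' hd hm'0, hB0 d n' hd hn'0,
    mul_star_mul_mul_mul_star_eq, star_w_mul_coe_zpow_mul_w_eq_zero hiso hB0 hB1 hB3 hd ht,
    mul_zero, zero_mul, mul_zero, zero_mul]

end MonoidWithZero

theorem stmt11_general {A : Type*} [NormedRing A] [StarRing A]
    (u : unitary A) (w : ℕ → A)
    (hiso : ∀ m : ℕ, 0 < m → star (w m) * w m = 1)
    (hB0 : ∀ m n : ℕ, 0 < m → 0 < n → w (m * n) = w m * w n)
    (hB1 : ∀ m : ℕ, 0 < m → w m * (u : A) = (u : A) ^ m * w m)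
    (hB2 : ∀ p q : ℕ, Nat.Prime p → Nat.Prime q → p ≠ q →
      star (w p) * w q = w q * star (w p))
    (hB3 : ∀ p k : ℕ, Nat.Prime p → 1 ≤ k → k < p →
      star (w p) * (u : A) ^ k * w p = 0)
    (m n d : ℕ) (hm : 0 < m) (hn : 0 < n) (hd : d = Nat.gcd m n)
    (α' β' : ℤ) (hαβ : 1 = α' * ((m / d : ℕ) : ℤ) - β' * ((n / d : ℕ) : ℤ))
    (k l : ℤ) :
    (¬ ((d : ℤ) ∣ (l - k)) →
      w m * star (w m) * (↑(u ^ (l - k)) : A) * (w n * star (w n)) = 0) ∧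
    (((d : ℤ) ∣ (l - k)) →
      w m * star (w m) * (↑(u ^ (l - k)) : A) * (w n * star (w n))
        = (↑(u ^ ((m : ℤ) * α' * (l - k) / d)) : A)
            * (w (Nat.lcm m n) * star (w (Nat.lcm m n)))
            * star (↑(u ^ ((n : ℤ) * β' * (l - k) / d)) : A)) := by
  subst hd
  refine ⟨w_mul_star_mul_coe_zpow_mul_w_mul_star_eq_zero hiso hB0 hB1 hB3 hm hn, ?_⟩
  rintro ⟨s, hs⟩
  obtain ⟨m', n', hco, hm', hn'⟩ := Nat.exists_coprime m n
  set d := m.gcd n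
  have hd : 0 < d := Nat.gcd_pos_of_pos_left n hm
  have hm'0 : 0 < m' := (CanonicallyOrderedAdd.mul_pos.mp (hm' ▸ hm)).1
  have hn'0 : 0 < n' := (CanonicallyOrderedAdd.mul_pos.mp (hn' ▸ hn)).1
  have hd' : (d : ℤ) ≠ 0 := by exact_mod_cast hd.ne'
  rw [hm', hn', Nat.mul_div_cancel _ hd, Nat.mul_div_cancel _ hd] at hαβ
  have hm_exp : (m : ℤ) * α' * (l - k) / d = d * m' * (α' * s) :=
    Int.ediv_eq_of_eq_mul_left hd' (by rw [hs, hm']; push_cast; ring)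
  have hn_exp : (n : ℤ) * β' * (l - k) / d = -(d * n' * (-(β' * s))) :=
    Int.ediv_eq_of_eq_mul_left hd' (by rw [hs, hn']; push_cast; ring)
  have hbezout : l - k = d * (m' * (α' * s) + n' * (-(β' * s))) := by
    rw [hs]; linear_combination (d : ℤ) * s * hαβ
  have hlcm : m.lcm n = d * m' * n' := by
    rw [hm', hn', Nat.lcm_mul_right, hco.lcm_eq_mul]; ring
  rw [hm_exp, hn_exp, zpow_neg, ← Unitary.star_eq_inv, Unitary.coe_star, star_star, hlcm,
    hbezout, hm', hn', mul_comm m', mul_comm n']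
  exact w_mul_star_mul_coe_zpow_mul_w_mul_star_of_coprime hiso hB0 hB1 hB2 hd hm'0 hn'0 hco _ _

/-- with `d = gcd(m,n)` and `1 = α' m/d - β' n/d`,
`w_m w_m* u^{l-k} w_n w_n*` is `0` unless `d ∣ l-k`, and otherwise equals
`u^{mα'(l-k)/d} w_{m∨n} w_{m∨n}* (u*)^{nβ'(l-k)/d}`. -/
theorem stmt11 {A : Type*} [NormedRing A] [StarRing A] [CStarRing A]
    [NormedAlgebra ℂ A] [CompleteSpace A] [StarModule ℂ A]
    (u : unitary A) (w : ℕ → A)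
    (hiso : ∀ m : ℕ, 0 < m → star (w m) * w m = 1)
    (hB0 : ∀ m n : ℕ, 0 < m → 0 < n → w (m * n) = w m * w n)
    (hB1 : ∀ m : ℕ, 0 < m → w m * (u : A) = (u : A) ^ m * w m)
    (hB2 : ∀ p q : ℕ, Nat.Prime p → Nat.Prime q → p ≠ q →
      star (w p) * w q = w q * star (w p))
    (hB3 : ∀ p k : ℕ, Nat.Prime p → 1 ≤ k → k < p →
      star (w p) * (u : A) ^ k * w p = 0)
    (m n d : ℕ) (hm : 0 < m) (hn : 0 < n) (hd : d = Nat.gcd m n)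
    (α' β' : ℤ) (hαβ : 1 = α' * ((m / d : ℕ) : ℤ) - β' * ((n / d : ℕ) : ℤ))
    (k l : ℤ) :
    (¬ ((d : ℤ) ∣ (l - k)) →
      w m * star (w m) * (↑(u ^ (l - k)) : A) * (w n * star (w n)) = 0) ∧
    (((d : ℤ) ∣ (l - k)) →
      w m * star (w m) * (↑(u ^ (l - k)) : A) * (w n * star (w n))
        = (↑(u ^ ((m : ℤ) * α' * (l - k) / d)) : A)
            * (w (Nat.lcm m n) * star (w (Nat.lcm m n)))
            * star (↑(u ^ ((n : ℤ) * β' * (l - k) / d)) : A)) :=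
  stmt11_general u w hiso hB0 hB1 hB2 hB3 m n d hm hn hd α' β' hαβ k l
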